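/- If X₁ and X₂ are i.i.d. Weibull with shape α > 0 and scale β > 0, then E[(log X₁ + log X₂)/(2 log 2) − log(min{X₁, X₂})/log 2] = 1/α. That is, the symmetric kernel H₁(x₁,x₂) = (log x₁ + log x₂)/(2 log 2) − log(min{x₁,x₂})/log 2 is an unbiased estimator of 1/α. -/

import Mathlib

open MeasureTheory ProbabilityTheory Real

/-- CDF of the Weibull distribution with shape `α` and scale `β`. -/
noncomputable def weibullCDF (α β x : ℝ) : ℝ :=
  if x ≤ 0 then 0 else 1 - Real.exp (-(x / β) ^ α)

/-- `X` is Weibull(α, β)-distributed under `μ`. -/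
def IsWeibull {Ω : Type*} [MeasurableSpace Ω] (μ : Measure Ω) (X : Ω → ℝ)
    (α β : ℝ) : Prop :=
  ∀ x : ℝ, μ {ω | X ω ≤ x} = ENNReal.ofReal (weibullCDF α β x)

/-!
Write a Weibull(α, β) variable as `β * E ^ α⁻¹` with `E` standard exponential, so that
`E[log X] = log β + α⁻¹ E[log E]`. The minimum of two independent Weibull(α, β) variables is
Weibull(α, β / 2 ^ α⁻¹), hence `E[log min] = E[log X] - log 2 / α`. In the kernel the unknown
constant `E[log E]` (which is `-γ`) cancels, leaving `(log 2 / α) / log 2 = 1 / α`.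
-/

open Set

lemma abs_log_le_rpow_neg_half_add_rpow_half {x : ℝ} (hx : 0 < x) :
    |log x| ≤ 2 * (x ^ (-(1 / 2) : ℝ) + x ^ (1 / 2 : ℝ)) := by
  have hupper : log x ≤ 2 * x ^ (1 / 2 : ℝ) := by
    have := log_le_rpow_div hx.le (one_half_pos (α := ℝ))
    linarith
  have hlower : -log x ≤ 2 * x ^ (-(1 / 2) : ℝ) := by
    have := log_le_rpow_div (inv_pos.mpr hx).le (one_half_pos (α := ℝ))
    rw [log_inv, inv_rpow hx.le, ← rpow_neg hx.le] at this
    linarith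
  have := rpow_pos_of_pos hx (-(1 / 2))
  have := rpow_pos_of_pos hx (1 / 2)
  rw [abs_le]
  constructor <;> linarith

lemma integrableOn_log_mul_exp_neg : IntegrableOn (fun x => log x * exp (-x)) (Ioi 0) := by
  have hbound : IntegrableOn
      (fun x => 2 * (exp (-x) * x ^ ((1 / 2 : ℝ) - 1) + exp (-x) * x ^ ((3 / 2 : ℝ) - 1)))
      (Ioi 0) :=
    ((GammaIntegral_convergent (by norm_num)).add
      (GammaIntegral_convergent (by norm_num))).const_mul 2
  refine hbound.mono' (by fun_prop) ?_
  filter_upwards [ae_restrict_mem measurableSet_Ioi] with x (hx : 0 < x)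
  rw [norm_mul, norm_of_nonneg (exp_pos _).le, norm_eq_abs,
    show (1 / 2 : ℝ) - 1 = -(1 / 2) by norm_num, show (3 / 2 : ℝ) - 1 = 1 / 2 by norm_num]
  calc |log x| * exp (-x) ≤ 2 * (x ^ (-(1 / 2) : ℝ) + x ^ (1 / 2 : ℝ)) * exp (-x) :=
        mul_le_mul_of_nonneg_right (abs_log_le_rpow_neg_half_add_rpow_half hx) (exp_pos _).le
    _ = _ := by ring

lemma integrable_log_expMeasure : Integrable log (expMeasure 1) := by
  have hpdf : Measurable (gammaPDF 1 1) := (measurable_gammaPDFReal 1 1).ennreal_ofReal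
  rw [expMeasure, gammaMeasure,
    integrable_withDensity_iff hpdf (ae_of_all _ fun _ => ENNReal.ofReal_lt_top)]
  have hdensity : (fun x => log x * (gammaPDF 1 1 x).toReal) =
      (Ioi 0).indicator fun x => log x * exp (-x) := by
    ext x
    rcases lt_trichotomy x 0 with hx | rfl | hx
    · simp [gammaPDF, gammaPDFReal, hx.not_ge, hx.le]
    · simp
    · simp [gammaPDF, gammaPDFReal, hx, hx.le, (exp_pos _).le]
  rw [hdensity, integrable_indicator_iff measurableSet_Ioi]
  exact integrableOn_log_mul_exp_neg

instance isProbabilityMeasure_expMeasure_one : IsProbabilityMeasure (expMeasure 1) :=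
  isProbabilityMeasure_expMeasure one_pos

lemma expMeasure_one_Iic (x : ℝ) :
    expMeasure 1 (Iic x) = ENNReal.ofReal (if 0 ≤ x then 1 - exp (-x) else 0) := by
  rw [← ofReal_cdf, cdf_expMeasure_eq one_pos, one_mul]

lemma ae_pos_expMeasure_one : ∀ᵐ u ∂expMeasure 1, 0 < u := by
  rw [ae_iff]
  simp only [not_lt]
  exact (expMeasure_one_Iic 0).trans (by simp)

noncomputable def weibullMeasure (α β : ℝ) : Measure ℝ :=
  (expMeasure 1).map fun u => β * u ^ α⁻¹

instance isProbabilityMeasure_weibullMeasure (α β : ℝ) :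
    IsProbabilityMeasure (weibullMeasure α β) :=
  Measure.isProbabilityMeasure_map (by fun_prop)

lemma weibullMeasure_Iic {α β : ℝ} (hα : 0 < α) (hβ : 0 < β) (a : ℝ) :
    weibullMeasure α β (Iic a) = ENNReal.ofReal (weibullCDF α β a) := by
  rw [weibullMeasure, Measure.map_apply (by fun_prop) measurableSet_Iic,
    ← measure_inter_conull (t := Ioi 0) ae_pos_expMeasure_one]
  by_cases ha : a ≤ 0
  · have hempty : (fun u => β * u ^ α⁻¹) ⁻¹' Iic a ∩ Ioi 0 = ∅ :=
      eq_empty_of_forall_notMem fun u ⟨hle, (hu : 0 < u)⟩ =>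
        (mul_pos hβ (rpow_pos_of_pos hu _)).not_ge (le_trans hle ha)
    rw [hempty, measure_empty, weibullCDF, if_pos ha, ENNReal.ofReal_zero]
  · rw [not_le] at ha
    have hpre : (fun u => β * u ^ α⁻¹) ⁻¹' Iic a ∩ Ioi 0 = Iic ((a / β) ^ α) ∩ Ioi 0 := by
      ext u
      simp only [mem_inter_iff, mem_preimage, mem_Iic, mem_Ioi, and_congr_left_iff]
      intro hu
      rw [← le_div_iff₀' hβ, rpow_inv_le_iff_of_pos hu.le (div_pos ha hβ).le hα]
    rw [hpre, measure_inter_conull (t := Ioi 0) ae_pos_expMeasure_one, expMeasure_one_Iic,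
      if_pos (by positivity), weibullCDF, if_neg ha.not_ge]

lemma log_mul_rpow_inv_ae_eq {α β : ℝ} (hβ : 0 < β) :
    (fun u => log (β * u ^ α⁻¹)) =ᵐ[expMeasure 1] fun u => log β + α⁻¹ * log u := by
  filter_upwards [ae_pos_expMeasure_one] with u hu
  rw [log_mul hβ.ne' (rpow_pos_of_pos hu _).ne', log_rpow hu]

lemma integrable_log_weibullMeasure {α β : ℝ} (hβ : 0 < β) :
    Integrable log (weibullMeasure α β) := by
  rw [weibullMeasure, integrable_map_measure measurable_log.aestronglyMeasurable (by fun_prop)]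
  exact ((integrable_const _).add (integrable_log_expMeasure.const_mul _)).congr
    (log_mul_rpow_inv_ae_eq hβ).symm

lemma integral_log_weibullMeasure {α β : ℝ} (hβ : 0 < β) :
    ∫ x, log x ∂weibullMeasure α β = log β + α⁻¹ * ∫ u, log u ∂expMeasure 1 := by
  rw [weibullMeasure, integral_map (by fun_prop) measurable_log.aestronglyMeasurable,
    integral_congr_ae (log_mul_rpow_inv_ae_eq hβ),
    integral_add (integrable_const _) (integrable_log_expMeasure.const_mul _),
    integral_const_mul, integral_const, probReal_univ, one_smul]

lemma weibullCDF_nonneg {α β : ℝ} (hβ : 0 ≤ β) (x : ℝ) : 0 ≤ weibullCDF α β x := by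
  unfold weibullCDF
  split_ifs with hx
  · exact le_rfl
  · rw [not_le] at hx
    exact sub_nonneg.mpr <| exp_le_one_iff.mpr <| neg_nonpos.mpr <|
      rpow_nonneg (div_nonneg hx.le hβ) _

lemma weibullCDF_le_one (α β x : ℝ) : weibullCDF α β x ≤ 1 := by
  unfold weibullCDF
  split_ifs
  · exact zero_le_one
  · exact sub_le_self _ (exp_pos _).le

lemma one_sub_weibullCDF_mul_self {α β : ℝ} (hα : α ≠ 0) (hβ : 0 ≤ β) (x : ℝ) :
    (1 - weibullCDF α β x) * (1 - weibullCDF α β x) = 1 - weibullCDF α (β / 2 ^ α⁻¹) x := by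
  unfold weibullCDF
  split_ifs with hx
  · norm_num
  · rw [not_le] at hx
    have hscale : (x / (β / 2 ^ α⁻¹)) ^ α = 2 * (x / β) ^ α := by
      rw [div_div_eq_mul_div, mul_div_right_comm, mul_rpow (div_nonneg hx.le hβ) (by positivity),
        rpow_inv_rpow zero_le_two hα, mul_comm]
    rw [sub_sub_cancel, sub_sub_cancel, ← exp_add, hscale]
    congr 1
    ring

namespace IsWeibull

variable {Ω : Type*} [MeasurableSpace Ω] {μ : Measure Ω} {X X₁ X₂ : Ω → ℝ} {α β : ℝ}

lemma map_eq (hα : 0 < α) (hβ : 0 < β) (hm : Measurable X) (hX : IsWeibull μ X α β) :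
    μ.map X = weibullMeasure α β :=
  (Measure.ext_of_Iic _ _ fun a => by
    rw [weibullMeasure_Iic hα hβ, Measure.map_apply hm measurableSet_Iic]
    exact (hX a).symm).symm

lemma integrable_log (hα : 0 < α) (hβ : 0 < β) (hm : Measurable X) (hX : IsWeibull μ X α β) :
    Integrable (fun ω => log (X ω)) μ := by
  refine (integrable_map_measure (g := log) (by fun_prop) hm.aemeasurable).mp ?_
  rw [hX.map_eq hα hβ hm]
  exact integrable_log_weibullMeasure hβ

lemma integral_log (hα : 0 < α) (hβ : 0 < β) (hm : Measurable X) (hX : IsWeibull μ X α β) :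
    ∫ ω, log (X ω) ∂μ = log β + α⁻¹ * ∫ u, log u ∂expMeasure 1 := by
  rw [← integral_map (f := log) hm.aemeasurable (by fun_prop), hX.map_eq hα hβ hm,
    integral_log_weibullMeasure hβ]

lemma measure_preimage_Ioi [IsProbabilityMeasure μ] (hβ : 0 ≤ β) (hm : Measurable X)
    (hX : IsWeibull μ X α β) (x : ℝ) :
    μ (X ⁻¹' Ioi x) = ENNReal.ofReal (1 - weibullCDF α β x) := by
  rw [← compl_Iic, preimage_compl, prob_compl_eq_one_sub (hm measurableSet_Iic),
    ENNReal.ofReal_sub _ (weibullCDF_nonneg hβ x), ENNReal.ofReal_one]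
  exact congrArg (1 - ·) (hX x)

protected lemma min [IsProbabilityMeasure μ] (hα : α ≠ 0) (hβ : 0 ≤ β) (hm₁ : Measurable X₁)
    (hm₂ : Measurable X₂) (hX₁ : IsWeibull μ X₁ α β) (hX₂ : IsWeibull μ X₂ α β)
    (hindep : IndepFun X₁ X₂ μ) :
    IsWeibull μ (fun ω => min (X₁ ω) (X₂ ω)) α (β / 2 ^ α⁻¹) := by
  intro x
  have hcompl : {ω | min (X₁ ω) (X₂ ω) ≤ x} = (X₁ ⁻¹' Ioi x ∩ X₂ ⁻¹' Ioi x)ᶜ := by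
    ext ω
    simp [or_iff_not_and_not]
  have hsurv_nonneg : 0 ≤ 1 - weibullCDF α β x := sub_nonneg.mpr (weibullCDF_le_one α β x)
  rw [hcompl, prob_compl_eq_one_sub ((hm₁ measurableSet_Ioi).inter (hm₂ measurableSet_Ioi)),
    hindep.measure_inter_preimage_eq_mul _ _ measurableSet_Ioi measurableSet_Ioi,
    hX₁.measure_preimage_Ioi hβ hm₁, hX₂.measure_preimage_Ioi hβ hm₂,
    ← ENNReal.ofReal_mul hsurv_nonneg, one_sub_weibullCDF_mul_self hα hβ, ← ENNReal.ofReal_one,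
    ← ENNReal.ofReal_sub _ (sub_nonneg.mpr (weibullCDF_le_one _ _ x)), sub_sub_cancel]

end IsWeibull

theorem weibull_kernel_H1_unbiased {Ω : Type*} [MeasurableSpace Ω] (μ : Measure Ω)
    [IsProbabilityMeasure μ] (X₁ X₂ : Ω → ℝ) (α β : ℝ) (hα : 0 < α) (hβ : 0 < β)
    (hm₁ : Measurable X₁) (hm₂ : Measurable X₂)
    (hX₁ : IsWeibull μ X₁ α β) (hX₂ : IsWeibull μ X₂ α β)
    (hindep : IndepFun X₁ X₂ μ) :
    ∫ ω, ((Real.log (X₁ ω) + Real.log (X₂ ω)) / (2 * Real.log 2)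
        - Real.log (min (X₁ ω) (X₂ ω)) / Real.log 2) ∂μ = 1 / α := by
  have hmin := hX₁.min hα.ne' hβ.le hm₁ hm₂ hX₂ hindep
  have hβmin : 0 < β / 2 ^ α⁻¹ := by positivity
  have hm : Measurable fun ω => min (X₁ ω) (X₂ ω) := hm₁.min hm₂
  have hint₁ := hX₁.integrable_log hα hβ hm₁
  have hint₂ := hX₂.integrable_log hα hβ hm₂
  have hint_sum : Integrable (fun ω => (log (X₁ ω) + log (X₂ ω)) / (2 * log 2)) μ :=
    (hint₁.add hint₂).div_const _
  have hint_min : Integrable (fun ω => log (min (X₁ ω) (X₂ ω)) / log 2) μ :=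
    (hmin.integrable_log hα hβmin hm).div_const _
  rw [integral_sub hint_sum hint_min, integral_div, integral_div, integral_add hint₁ hint₂,
    hX₁.integral_log hα hβ hm₁, hX₂.integral_log hα hβ hm₂, hmin.integral_log hα hβmin hm,
    log_div hβ.ne' (by positivity), log_rpow two_pos]
  have hlog2 : log 2 ≠ 0 := (log_pos one_lt_two).ne'
  field_simp
  ring
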